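/- Descent and annihilation relations for the kernel generators (the paper's identities d_{α,−} · y_α^{(n)} = y_α^{(n−1)} and d_{α,−}^n · y_α^{(n)} = 0): let a ∈ G with a ≠ 0 and let n ≥ 1. Then t_a Y_{a,n} = Y_{a,n−1}, and consequently t_a^n Y_{a,n} = 0. -/
import Mathlib


open Classical

/-- The lattice `ℤ^d`, modeling the lattice `Λ^{1/2}` of half-weights. -/
abbrev Glat (d : ℕ) : Type := Fin d → ℤ

/-- Multiplication by `d_{α,-} = α^{-1/2} - α^{1/2}` on unbounded Laurent series,
modeled as the operator `(t_a f) x = f (x + a) - f (x - a)`. -/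
def ta {d : ℕ} (a : Glat d) (f : Glat d → ℂ) : Glat d → ℂ :=
  fun x => f (x + a) - f (x - a)

/-- The coefficient sequence `c_n` of the series `y_α^{(n)}` in powers of `α^{1/2}`:
for `n ≥ 1`, `c_n (2k+n) = choose (n-1+k) (n-1)` and
`c_n (-(2k+n)) = (-1)^{n+1} * choose (n-1+k) (n-1)` for `k ∈ ℕ`, `0` elsewhere; `c_0 = 0`. -/
def cseq (n : ℕ) (m : ℤ) : ℤ :=
  if n = 0 then 0
  else if (n : ℤ) ≤ m ∧ (m - (n : ℤ)) % 2 = 0 then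
    ((n - 1 + ((m - (n : ℤ)) / 2).toNat).choose (n - 1) : ℤ)
  else if m ≤ -(n : ℤ) ∧ (m + (n : ℤ)) % 2 = 0 then
    (-1) ^ (n + 1) * ((n - 1 + ((-m - (n : ℤ)) / 2).toNat).choose (n - 1) : ℤ)
  else 0

/-- The series `y_α^{(n)}`, supported on the line `ℤ • a`, with `Y_{a,n} (m • a) = c_n m`
(well defined for `a ≠ 0` since `a` then has infinite order). -/
noncomputable def Yan {d : ℕ} (a : Glat d) (n : ℕ) : Glat d → ℂ :=
  fun x => if h : ∃ m : ℤ, x = m • a then (cseq n h.choose : ℂ) else 0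

lemma cseq_eq_zero (n : ℕ) (m : ℤ) (h1 : ¬((n : ℤ) ≤ m ∧ (m - (n : ℤ)) % 2 = 0))
    (h2 : ¬(m ≤ -(n : ℤ) ∧ (m + (n : ℤ)) % 2 = 0)) : cseq n m = 0 := by
  unfold cseq; split_ifs <;> tauto

lemma cseq_pos (q k : ℕ) : cseq (q + 1) ((q + 1 : ℤ) + 2 * k) = ((q + k).choose q : ℤ) := by
  unfold cseq
  rw [if_neg (by omega), if_pos ⟨by omega, by omega⟩]
  have h1 : (((q + 1 : ℤ) + 2 * k - (q + 1)) / 2).toNat = k := by omega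
  norm_num [h1]

lemma cseq_neg (q k : ℕ) :
    cseq (q + 1) (-((q + 1 : ℤ) + 2 * k)) = (-1) ^ q * ((q + k).choose q : ℤ) := by
  unfold cseq
  rw [if_neg (by omega), if_neg (by omega), if_pos ⟨by omega, by omega⟩]
  have h1 : ((-(-((q + 1 : ℤ) + 2 * k)) - (q + 1)) / 2).toNat = k := by omega
  have h2 : ((-1 : ℤ)) ^ (q + 1 + 1) = (-1) ^ q := by
    rw [pow_succ, pow_succ]; ring
  norm_num [h1, h2]

lemma cseq_one (x : ℤ) : cseq 1 x = if x % 2 = 1 then 1 else 0 := by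
  unfold cseq
  split_ifs <;> simp_all <;> omega

lemma cseq_rec (n : ℕ) (hn : 1 ≤ n) (m : ℤ) :
    cseq n (m + 1) - cseq n (m - 1) = cseq (n - 1) m := by
  rcases n with _ | _ | q
  · omega
  · show cseq 1 (m + 1) - cseq 1 (m - 1) = cseq 0 m
    simp only [cseq_one]
    have h0 : cseq 0 m = 0 := by simp [cseq]
    rw [h0]
    split_ifs with ha hb hb <;> omega
  · show cseq (q + 2) (m + 1) - cseq (q + 2) (m - 1) = cseq (q + 1) m
    by_cases h1 : (q + 1 : ℤ) ≤ m ∧ (m - (q + 1 : ℤ)) % 2 = 0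
    · obtain ⟨k, hk⟩ : ∃ k : ℕ, m = (q + 1 : ℤ) + 2 * k := ⟨((m - (q + 1)) / 2).toNat, by omega⟩
      have hv1 : cseq (q + 2) (m + 1) = ((q + 1 + k).choose (q + 1) : ℤ) := by
        have h := cseq_pos (q + 1) k
        have harg : ((q + 1 : ℕ) : ℤ) + 1 + 2 * k = m + 1 := by push_cast; omega
        rwa [harg] at h
      have hv3 : cseq (q + 1) m = ((q + k).choose q : ℤ) := by
        have h := cseq_pos q k
        have harg : ((q : ℕ) : ℤ) + 1 + 2 * k = m := by push_cast; omega
        rwa [harg] at h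
      rcases k with _ | k'
      · have hv2 : cseq (q + 2) (m - 1) = 0 :=
          cseq_eq_zero _ _ (by omega) (by omega)
        rw [hv1, hv2, hv3]
        simp
      · have hv2 : cseq (q + 2) (m - 1) = ((q + 1 + k').choose (q + 1) : ℤ) := by
          have h := cseq_pos (q + 1) k'
          have harg : ((q + 1 : ℕ) : ℤ) + 1 + 2 * k' = m - 1 := by push_cast; omega
          rwa [harg] at h
        rw [hv1, hv2, hv3]
        have hp : (q + 1 + (k' + 1)).choose (q + 1)
            = (q + k' + 1).choose q + (q + k' + 1).choose (q + 1) := by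
          rw [show q + 1 + (k' + 1) = (q + k' + 1) + 1 from by omega]
          exact Nat.choose_succ_succ' (q + k' + 1) q
        rw [hp, show q + 1 + k' = q + k' + 1 from by omega,
          show q + (k' + 1) = q + k' + 1 from by omega]
        push_cast
        ring
    · by_cases h2 : m ≤ -(q + 1 : ℤ) ∧ (m + (q + 1 : ℤ)) % 2 = 0
      · obtain ⟨k, hk⟩ : ∃ k : ℕ, m = -((q + 1 : ℤ) + 2 * k) :=
          ⟨((-m - (q + 1)) / 2).toNat, by omega⟩
        have hv2 : cseq (q + 2) (m - 1) = (-1) ^ (q + 1) * ((q + 1 + k).choose (q + 1) : ℤ) := by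
          have h := cseq_neg (q + 1) k
          have harg : -(((q + 1 : ℕ) : ℤ) + 1 + 2 * k) = m - 1 := by push_cast; omega
          rwa [harg] at h
        have hv3 : cseq (q + 1) m = (-1) ^ q * ((q + k).choose q : ℤ) := by
          have h := cseq_neg q k
          have harg : -(((q : ℕ) : ℤ) + 1 + 2 * k) = m := by push_cast; omega
          rwa [harg] at h
        rcases k with _ | k'
        · have hv1 : cseq (q + 2) (m + 1) = 0 :=
            cseq_eq_zero _ _ (by omega) (by omega)
          rw [hv1, hv2, hv3]
          simp [pow_succ]
        · have hv1 : cseq (q + 2) (m + 1)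
              = (-1) ^ (q + 1) * ((q + 1 + k').choose (q + 1) : ℤ) := by
            have h := cseq_neg (q + 1) k'
            have harg : -(((q + 1 : ℕ) : ℤ) + 1 + 2 * k') = m + 1 := by push_cast; omega
            rwa [harg] at h
          rw [hv1, hv2, hv3]
          have hp : (q + 1 + (k' + 1)).choose (q + 1)
              = (q + k' + 1).choose q + (q + k' + 1).choose (q + 1) := by
            rw [show q + 1 + (k' + 1) = (q + k' + 1) + 1 from by omega]
            exact Nat.choose_succ_succ' (q + k' + 1) q
          rw [hp, show q + 1 + k' = q + k' + 1 from by omega,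
            show q + (k' + 1) = q + k' + 1 from by omega]
          push_cast
          rw [pow_succ]
          ring
      · have hv1 : cseq (q + 2) (m + 1) = 0 := cseq_eq_zero _ _ (by omega) (by omega)
        have hv2 : cseq (q + 2) (m - 1) = 0 := cseq_eq_zero _ _ (by omega) (by omega)
        have hv3 : cseq (q + 1) m = 0 := cseq_eq_zero _ _ (by omega) (by omega)
        rw [hv1, hv2, hv3]; ring

lemma smul_inj {d : ℕ} {a : Glat d} (ha : a ≠ 0) {m m' : ℤ} (h : m • a = m' • a) : m = m' := by
  obtain ⟨i, hi⟩ : ∃ i, a i ≠ 0 := by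
    by_contra h'; push_neg at h'; exact ha (funext h')
  have h2 := congrFun h i
  simp only [Pi.smul_apply, smul_eq_mul] at h2
  exact mul_right_cancel₀ hi h2

lemma Yan_smul {d : ℕ} {a : Glat d} (ha : a ≠ 0) (n : ℕ) (m : ℤ) :
    Yan a n (m • a) = (cseq n m : ℂ) := by
  unfold Yan
  rw [dif_pos ⟨m, rfl⟩]
  have h : (⟨m, rfl⟩ : ∃ k : ℤ, m • a = k • a).choose = m :=
    (smul_inj ha (⟨m, rfl⟩ : ∃ k : ℤ, m • a = k • a).choose_spec).symm
  rw [h]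

lemma Yan_not {d : ℕ} {a : Glat d} (n : ℕ) {x : Glat d} (hx : ¬∃ m : ℤ, x = m • a) :
    Yan a n x = 0 := dif_neg hx

lemma descent {d : ℕ} (a : Glat d) (ha : a ≠ 0) (n : ℕ) (hn : 1 ≤ n) :
    ta a (Yan a n) = Yan a (n - 1) := by
  funext x
  by_cases hx : ∃ m : ℤ, x = m • a
  · obtain ⟨m, rfl⟩ := hx
    have h1 : m • a + a = (m + 1) • a := by rw [add_smul, one_smul]
    have h2 : m • a - a = (m - 1) • a := by rw [sub_smul, one_smul]
    rw [ta, h1, h2, Yan_smul ha, Yan_smul ha, Yan_smul ha]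
    rw [← Int.cast_sub, cseq_rec n hn m]
  · have hp : ¬∃ m : ℤ, x + a = m • a := by
      rintro ⟨m, hm⟩
      exact hx ⟨m - 1, by rw [sub_smul, one_smul, ← hm]; abel⟩
    have hq : ¬∃ m : ℤ, x - a = m • a := by
      rintro ⟨m, hm⟩
      exact hx ⟨m + 1, by rw [add_smul, one_smul, ← hm]; abel⟩
    rw [ta, Yan_not n hp, Yan_not n hq, Yan_not _ hx, sub_zero]

lemma Yan_zero {d : ℕ} (a : Glat d) : Yan a 0 = 0 := by
  funext x
  unfold Yan
  split <;> simp [cseq]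

/-- Descent and annihilation: `d_{α,-} · y_α^{(n)} = y_α^{(n-1)}` and
`d_{α,-}^n · y_α^{(n)} = 0`, i.e. `t_a Y_{a,n} = Y_{a,n-1}` and `t_a^n Y_{a,n} = 0`. -/
theorem ta_Yan_descent_and_annihilation {d : ℕ} (hd : 1 ≤ d) (a : Glat d) (ha : a ≠ 0)
    (n : ℕ) (hn : 1 ≤ n) :
    ta a (Yan a n) = Yan a (n - 1) ∧ (ta a)^[n] (Yan a n) = 0 := by
  refine ⟨descent a ha n hn, ?_⟩
  induction n, hn using Nat.le_induction with
  | base => simpa [Yan_zero] using descent a ha 1 le_rfl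
  | succ n hn ih =>
    rw [Function.iterate_succ_apply, descent a ha (n + 1) (by omega)]
    simpa using ih
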